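/- For n ≥ 2, the number of parking functions of size n whose parking permutation avoids 132, 231, 312, and 321 equals (3/2)·n!. -/

import Mathlib

open Finset

noncomputable section

/-- The parking process over the first `k` cars (cars are `0,...,k-1`, i.e. cars `1,...,k`
in 1-indexed terms): returns `some occ` where `occ` maps each spot to the car parked there
(`none` meaning empty), or `none` if some car failed to park.  Car `c` drives to its
preferred spot `f c` and parks at the first free spot with index `≥ f c`, failing if
no such spot exists. -/
def parkAux {n : ℕ} (f : Fin n → Fin n) : ℕ → Option (Fin n → Option (Fin n))
  | 0 => some fun _ => none
  | k + 1 =>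
    (parkAux f k).bind fun occ =>
      if h : k < n then
        if hS : (Finset.univ.filter fun s => f ⟨k, h⟩ ≤ s ∧ occ s = none).Nonempty then
          some (Function.update occ
            ((Finset.univ.filter fun s => f ⟨k, h⟩ ≤ s ∧ occ s = none).min' hS)
            (some ⟨k, h⟩))
        else none
      else some occ

/-- All `n` cars park successfully. -/
def AllPark {n : ℕ} (f : Fin n → Fin n) : Prop := (parkAux f n).isSome

/-- `f` is a parking function: for every `i ∈ [n]`, at least `i` cars prefer
the first `i` spots.  (Here `i : Fin n` denotes the `(i+1)`-st spot, 0-indexed.) -/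
def IsParkingFunction {n : ℕ} (f : Fin n → Fin n) : Prop :=
  ∀ i : Fin n, i.val + 1 ≤ (Finset.univ.filter fun j => f j ≤ i).card

/-- `ρ` is the parking permutation of `f`: after all cars have parked,
spot `i` is occupied by car `ρ i`. -/
def IsParkingPerm {n : ℕ} (f : Fin n → Fin n) (ρ : Equiv.Perm (Fin n)) : Prop :=
  parkAux f n = some fun i => some (ρ i)

/-- `π` contains `σ` as a pattern. -/
def ContainsPattern {n m : ℕ} (π : Equiv.Perm (Fin n)) (σ : Equiv.Perm (Fin m)) : Prop :=
  ∃ g : Fin m → Fin n, StrictMono g ∧ ∀ a b : Fin m, σ a < σ b ↔ π (g a) < π (g b)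

/-- `ρ` avoids every pattern in the list `pats`. -/
def AvoidsAll {n : ℕ} (ρ : Equiv.Perm (Fin n)) (pats : List (Equiv.Perm (Fin 3))) : Prop :=
  ∀ σ ∈ pats, ¬ ContainsPattern ρ σ

/-- The number of parking functions of size `n` whose parking permutation avoids
all patterns in `pats`. -/
def pk (n : ℕ) (pats : List (Equiv.Perm (Fin 3))) : ℕ :=
  Nat.card {f : Fin n → Fin n // IsParkingFunction f ∧
    ∃ ρ : Equiv.Perm (Fin n), IsParkingPerm f ρ ∧ AvoidsAll ρ pats}

def p123 : Equiv.Perm (Fin 3) := Equiv.ofBijective ![0, 1, 2] (by decide)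
def p132 : Equiv.Perm (Fin 3) := Equiv.ofBijective ![0, 2, 1] (by decide)
def p213 : Equiv.Perm (Fin 3) := Equiv.ofBijective ![1, 0, 2] (by decide)
def p231 : Equiv.Perm (Fin 3) := Equiv.ofBijective ![1, 2, 0] (by decide)
def p312 : Equiv.Perm (Fin 3) := Equiv.ofBijective ![2, 0, 1] (by decide)
def p321 : Equiv.Perm (Fin 3) := Equiv.ofBijective ![2, 1, 0] (by decide)

/-!
Car `c` ends in spot `ρ⁻¹ c` exactly when its preferred spot `x` satisfies `x ≤ ρ⁻¹ c` and every
spot in `[x, ρ⁻¹ c)` holds an earlier car. These conditions on the cars are independent, so the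
parking functions with outcome `ρ` form a product set, whose size is the product of the numbers
of admissible preferences of the cars.

A permutation avoiding 132, 231 and 321 increases after its first entry, and avoiding 312 as
well forces that first entry to be 0 or 1: the outcome is the identity or the transposition of
the first two spots. The identity is the outcome of the `n!` functions with `f c ≤ c`; the
transposition is the outcome of the `n!/2` functions with `f 0 = 1`, `f 1 = 0` and `f c ≤ c`
for the other cars.
-/

open Equiv

section Parking

variable {n : ℕ}

def parkedOcc (ρ : Perm (Fin n)) (k : ℕ) : Fin n → Option (Fin n) :=
  fun s => if (ρ s : ℕ) < k then some (ρ s) else none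

-- When the cars before `c` sit in their spots under `ρ`, spot `s` is free iff `c ≤ ρ s`; so this
-- says that car `c`, preferring spot `x`, parks in spot `ρ⁻¹ c`.
def ParksAt (ρ : Perm (Fin n)) (c x : Fin n) : Prop :=
  IsLeast {s | x ≤ s ∧ c ≤ ρ s} (ρ.symm c)

theorem parkedOcc_succ_apply_of_ne {ρ : Perm (Fin n)} {c s : Fin n} (hs : s ≠ ρ.symm c) :
    parkedOcc ρ (c + 1) s = parkedOcc ρ c s := by
  have hne : (ρ s : ℕ) ≠ c := fun h => hs (by rw [← Fin.ext h, symm_apply_apply])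
  simp only [parkedOcc]
  congr 1
  exact propext (by omega)

theorem update_eq_parkedOcc_succ_iff {ρ : Perm (Fin n)} {c m : Fin n}
    {o : Fin n → Option (Fin n)} (hm : o m = none) :
    Function.update o m (some c) = parkedOcc ρ (c + 1) ↔
      o = parkedOcc ρ c ∧ m = ρ.symm c := by
  have hmc : some c = parkedOcc ρ (c + 1) m ↔ m = ρ.symm c := by
    rw [eq_symm_apply]
    simp only [parkedOcc]
    split_ifs with h
    · exact ⟨fun h' => (Option.some_inj.mp h').symm, fun h' => by rw [h']⟩
    · exact iff_of_false (by simp) fun h' => h (by rw [← h']; omega)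
  rw [Function.update_eq_iff, hmc]
  constructor
  · rintro ⟨rfl, ho⟩
    refine ⟨funext fun s => ?_, rfl⟩
    by_cases hs : s = ρ.symm c
    · simp [hs, hm, parkedOcc]
    · rw [ho s hs, parkedOcc_succ_apply_of_ne hs]
  · rintro ⟨rfl, rfl⟩
    exact ⟨rfl, fun s hs => (parkedOcc_succ_apply_of_ne hs).symm⟩

theorem parkAux_succ_eq_some_iff {f : Fin n → Fin n} {ρ : Perm (Fin n)} {k : ℕ} (hk : k < n) :
    parkAux f (k + 1) = some (parkedOcc ρ (k + 1)) ↔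
      parkAux f k = some (parkedOcc ρ k) ∧ ParksAt ρ ⟨k, hk⟩ (f ⟨k, hk⟩) := by
  set c : Fin n := ⟨k, hk⟩
  rw [parkAux]
  rcases hpark : parkAux f k with _ | o
  · simp
  simp only [Option.bind_some, dif_pos hk, Option.some_inj]
  set S := univ.filter fun s => f c ≤ s ∧ o s = none
  split_ifs with hS
  · have hm : o (S.min' hS) = none := (mem_filter.mp (S.min'_mem hS)).2.2
    rw [Option.some_inj, update_eq_parkedOcc_succ_iff (c := c) hm]
    refine and_congr_right fun ho => ?_
    have hS' : (S : Set (Fin n)) = {s | f c ≤ s ∧ c ≤ ρ s} := by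
      refine Set.ext fun s => ?_
      rw [Finset.mem_coe, mem_filter, ho]
      simp only [parkedOcc, mem_univ, true_and, ite_eq_right_iff, reduceCtorEq,
        Set.mem_ofPred_eq, imp_false, not_lt, Fin.le_def]
    rw [ParksAt, ← hS']
    exact ⟨fun h => h ▸ S.isLeast_min' hS, (S.isLeast_min' hS).unique⟩
  · refine iff_of_false (by simp) fun ⟨ho, hpark⟩ => hS ⟨ρ.symm c, ?_⟩
    simpa [S, ho, parkedOcc, c] using hpark.1.1

theorem isParkingPerm_iff {f : Fin n → Fin n} {ρ : Perm (Fin n)} :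
    IsParkingPerm f ρ ↔ ∀ c, ParksAt ρ c (f c) := by
  have key : ∀ k ≤ n, parkAux f k = some (parkedOcc ρ k) ↔
      ∀ c : Fin n, c < k → ParksAt ρ c (f c) := by
    intro k
    induction k with
    | zero => simp [parkAux, parkedOcc, funext_iff]
    | succ k ih =>
      intro hk
      rw [parkAux_succ_eq_some_iff hk, ih (by omega)]
      constructor
      · rintro ⟨hprev, hlast⟩ c hc
        rcases Nat.lt_succ_iff_lt_or_eq.mp hc with hc | hc
        · exact hprev c hc
        · obtain rfl : c = ⟨k, hk⟩ := Fin.ext hc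
          exact hlast
      · exact fun h => ⟨fun c hc => h c (by omega), h _ (by simp)⟩
  have hfull : parkedOcc ρ n = fun s => some (ρ s) := funext fun s => if_pos (ρ s).isLt
  rw [IsParkingPerm, ← hfull, key n le_rfl]
  exact ⟨fun h c => h c c.isLt, fun h c _ => h c⟩

theorem IsParkingPerm.unique {f : Fin n → Fin n} {ρ ρ' : Perm (Fin n)} (h : IsParkingPerm f ρ)
    (h' : IsParkingPerm f ρ') : ρ = ρ' :=
  Equiv.ext fun s =>
    Option.some_injective _ (congrFun (Option.some_injective _ (h.symm.trans h')) s)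

theorem isParkingFunction_of_isParkingPerm {f : Fin n → Fin n} {ρ : Perm (Fin n)}
    (h : IsParkingPerm f ρ) : IsParkingFunction f := by
  have hpref (s : Fin n) : f (ρ s) ≤ s := by
    simpa using (isParkingPerm_iff.mp h (ρ s)).1.1
  intro i
  calc i.val + 1 = #(Iic i) := (Fin.card_Iic i).symm
    _ ≤ #(univ.filter fun j => f j ≤ i) :=
      card_le_card_of_injOn ρ (fun s hs => by simpa using (hpref s).trans (mem_Iic.mp hs))
        ρ.injective.injOn

theorem card_isParkingPerm_eq_prod (ρ : Perm (Fin n)) :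
    Nat.card {f : Fin n → Fin n // IsParkingPerm f ρ} = ∏ c, Nat.card {x // ParksAt ρ c x} := by
  rw [Nat.card_congr (Equiv.subtypeEquivRight fun _ => isParkingPerm_iff),
    Nat.card_congr Equiv.subtypePiEquivPi, Nat.card_pi]

theorem card_parksAt_one (c : Fin n) : Nat.card {x // ParksAt 1 c x} = c + 1 := by
  have hiff (x : Fin n) : ParksAt 1 c x ↔ x ∈ Iic c := by
    simp [ParksAt, IsLeast, lowerBounds, ← Perm.inv_def]
  rw [Nat.card_congr (Equiv.subtypeEquivRight hiff), Nat.card_eq_finsetCard, Fin.card_Iic]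

theorem card_isParkingPerm_one :
    Nat.card {f : Fin n → Fin n // IsParkingPerm f 1} = n.factorial := by
  rw [card_isParkingPerm_eq_prod, ← prod_range_add_one_eq_factorial, ← Fin.prod_univ_eq_prod_range]
  exact prod_congr rfl fun c _ => card_parksAt_one c

section Swap

variable {m : ℕ}

theorem swap_zero_one_lt_swap_zero_one {x y : Fin (m + 2)} (hxy : x < y) (hy : 2 ≤ (y : ℕ)) :
    swap 0 1 x < swap 0 1 y := by
  have hy0 : y ≠ 0 := by rintro rfl; simp at hy
  have hy1 : y ≠ 1 := by rintro rfl; simp at hy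
  rw [swap_apply_of_ne_of_ne hy0 hy1]
  rcases eq_or_ne x 0 with rfl | hx0
  · rw [swap_apply_left, Fin.lt_def, Fin.val_one]; omega
  rcases eq_or_ne x 1 with rfl | hx1
  · rw [swap_apply_right, Fin.lt_def, Fin.val_zero]; omega
  · rwa [swap_apply_of_ne_of_ne hx0 hx1]

theorem le_swap_zero_one_iff {c s : Fin (m + 2)} (hc : 2 ≤ (c : ℕ)) :
    c ≤ swap 0 1 s ↔ c ≤ s := by
  rcases eq_or_ne s 0 with rfl | hs0
  · simp only [swap_apply_left, Fin.le_def, Fin.val_zero, Fin.val_one]; omega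
  rcases eq_or_ne s 1 with rfl | hs1
  · simp only [swap_apply_right, Fin.le_def, Fin.val_zero, Fin.val_one]; omega
  rw [swap_apply_of_ne_of_ne hs0 hs1]

theorem parksAt_swap_zero_one_iff_of_two_le {c x : Fin (m + 2)} (hc : 2 ≤ (c : ℕ)) :
    ParksAt (swap 0 1) c x ↔ ParksAt 1 c x := by
  have hc0 : c ≠ 0 := by rintro rfl; simp at hc
  have hc1 : c ≠ 1 := by rintro rfl; simp at hc
  simp only [ParksAt, swap_apply_of_ne_of_ne hc0 hc1, le_swap_zero_one_iff hc,
    ← Perm.inv_def, swap_inv, inv_one, Perm.one_apply]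

theorem two_mul_card_isParkingPerm_swap_zero_one :
    2 * Nat.card {f : Fin (m + 2) → Fin (m + 2) // IsParkingPerm f (swap 0 1)} =
      Nat.card {f : Fin (m + 2) → Fin (m + 2) // IsParkingPerm f 1} := by
  have h0 : Nat.card {x // ParksAt (swap 0 1) (0 : Fin (m + 2)) x} = 1 := by
    have hiff (x : Fin (m + 2)) : ParksAt (swap 0 1) 0 x ↔ x = 1 := by
      simp only [ParksAt, IsLeast, lowerBounds, symm_swap, swap_apply_left, Fin.zero_le, and_true,
        Set.mem_ofPred_eq]
      exact ⟨fun h => le_antisymm h.1 (h.2 le_rfl), by rintro rfl; exact ⟨le_rfl, fun _ => id⟩⟩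
    simp [hiff]
  have h1 : Nat.card {x // ParksAt (swap 0 1) (1 : Fin (m + 2)) x} = 1 := by
    have hiff (x : Fin (m + 2)) : ParksAt (swap 0 1) 1 x ↔ x = 0 := by
      simp [ParksAt, IsLeast, lowerBounds]
    simp [hiff]
  have hrest (i : Fin m) : Nat.card {x // ParksAt (swap 0 1) i.succ.succ x} =
      Nat.card {x // ParksAt 1 i.succ.succ x} :=
    Nat.card_congr (Equiv.subtypeEquivRight fun _ => parksAt_swap_zero_one_iff_of_two_le (by simp))
  simp only [card_isParkingPerm_eq_prod, Fin.prod_univ_succ (n := m + 1),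
    Fin.prod_univ_succ (n := m), Fin.succ_zero_eq_one]
  rw [h0, h1, prod_congr rfl fun i _ => hrest i, card_parksAt_one, card_parksAt_one]
  simp

end Swap

end Parking

section Patterns

variable {n : ℕ}

theorem containsPattern_of_comp_eq {m : ℕ} {π : Perm (Fin n)} {σ : Perm (Fin m)}
    {g h : Fin m → Fin n} (hg : StrictMono g) (hh : StrictMono h) (hcomp : ∀ a, π (g a) = h (σ a)) :
    ContainsPattern π σ :=
  ⟨g, hg, fun a b => by rw [hcomp, hcomp, hh.lt_iff_lt]⟩

theorem containsPattern_of_triple {π : Perm (Fin n)} {σ : Perm (Fin 3)} {i₀ i₁ i₂ v₀ v₁ v₂ : Fin n}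
    (hi₀₁ : i₀ < i₁) (hi₁₂ : i₁ < i₂) (hv₀₁ : v₀ < v₁) (hv₁₂ : v₁ < v₂)
    (h : ∀ a, π (![i₀, i₁, i₂] a) = ![v₀, v₁, v₂] (σ a)) : ContainsPattern π σ :=
  containsPattern_of_comp_eq (by simp [hi₀₁, hi₁₂]) (by simp [hv₀₁, hv₁₂]) h

theorem eq_one_of_containsPattern_one {m : ℕ} {σ : Perm (Fin m)}
    (h : ContainsPattern (1 : Perm (Fin n)) σ) : σ = 1 := by
  obtain ⟨g, hg, hlt⟩ := h
  have hσ : StrictMono σ := fun a b hab => (hlt a b).mpr (hg hab)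
  exact DFunLike.coe_injective ((hσ.range_inj strictMono_id).mp (by simp))

theorem avoidsAll_one : AvoidsAll (1 : Perm (Fin n)) [p132, p231, p312, p321] := by
  intro σ hσ hcont
  rw [eq_one_of_containsPattern_one hcont] at hσ
  revert hσ
  decide

theorem Equiv.Perm.eq_of_strictMono_comp_succ {ρ ρ' : Perm (Fin (n + 1))}
    (hρ : StrictMono (ρ ∘ Fin.succ)) (hρ' : StrictMono (ρ' ∘ Fin.succ)) (h0 : ρ 0 = ρ' 0) :
    ρ = ρ' := by
  have key (π : Perm (Fin (n + 1))) (hπ : StrictMono (π ∘ Fin.succ)) :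
      π ∘ Fin.succ = (univ.erase (π 0)).orderEmbOfFin (by simp) :=
    orderEmbOfFin_unique _
      (fun x => mem_erase.mpr ⟨π.injective.ne (Fin.succ_ne_zero x), mem_univ _⟩) hπ
  ext x
  refine Fin.cases (by rw [h0]) (fun i => ?_) x
  have := congrFun ((key ρ hρ).trans (h0 ▸ (key ρ' hρ').symm)) i
  simpa using congrArg Fin.val this

theorem strictMono_comp_succ_of_avoids {ρ : Perm (Fin (n + 1))} (h132 : ¬ContainsPattern ρ p132)
    (h231 : ¬ContainsPattern ρ p231) (h321 : ¬ContainsPattern ρ p321) :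
    StrictMono (ρ ∘ Fin.succ) := by
  intro i j hij
  have hi : 0 < i.succ := Fin.succ_pos i
  have hij' : i.succ < j.succ := Fin.succ_lt_succ_iff.mpr hij
  by_contra hge
  have hji : ρ j.succ < ρ i.succ := lt_of_le_of_ne (not_lt.mp hge) (ρ.injective.ne hij'.ne')
  rcases lt_or_gt_of_ne (ρ.injective.ne (Fin.succ_ne_zero j).symm) with h0j | hj0
  · exact h132 (containsPattern_of_triple hi hij' h0j hji (by intro a; fin_cases a <;> rfl))
  rcases lt_or_gt_of_ne (ρ.injective.ne (Fin.succ_ne_zero i).symm) with h0i | hi0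
  · exact h231 (containsPattern_of_triple hi hij' hj0 h0i (by intro a; fin_cases a <;> rfl))
  · exact h321 (containsPattern_of_triple hi hij' hji hi0 (by intro a; fin_cases a <;> rfl))

section Swap

variable {m : ℕ}

theorem apply_zero_le_one_of_avoids {ρ : Perm (Fin (m + 2))}
    (hmono : StrictMono (ρ ∘ Fin.succ)) (h312 : ¬ContainsPattern ρ p312) : ρ 0 ≤ 1 := by
  by_contra! h1
  obtain ⟨i, hi⟩ : ∃ i, Fin.succ i = ρ.symm 0 :=
    Fin.exists_succ_eq.mpr fun h => by rw [ρ.symm_apply_eq] at h; simp [← h] at h1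
  obtain ⟨j, hj⟩ : ∃ j, Fin.succ j = ρ.symm 1 :=
    Fin.exists_succ_eq.mpr fun h => by rw [ρ.symm_apply_eq] at h; simp [← h] at h1
  have hv : ρ i.succ < ρ j.succ := by simp [hi, hj]
  have hij : i < j := hmono.lt_iff_lt.mp hv
  exact h312 (containsPattern_of_triple (Fin.succ_pos i) (Fin.succ_lt_succ_iff.mpr hij) hv
    (by simpa [hj] using h1) (by intro a; fin_cases a <;> rfl))

theorem strictMono_swap_zero_one_comp_succ : StrictMono (swap (0 : Fin (m + 2)) 1 ∘ Fin.succ) :=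
  fun x y hxy => swap_zero_one_lt_swap_zero_one (Fin.succ_lt_succ_iff.mpr hxy)
    (by have : (x : ℕ) < y := hxy; simp; omega)

theorem eq_one_or_eq_swap_of_avoidsAll {ρ : Perm (Fin (m + 2))}
    (h : AvoidsAll ρ [p132, p231, p312, p321]) : ρ = 1 ∨ ρ = swap 0 1 := by
  have hmono := strictMono_comp_succ_of_avoids (h _ (by simp)) (h _ (by simp)) (h _ (by simp))
  rcases (apply_zero_le_one_of_avoids hmono (h _ (by simp))).lt_or_eq with h0 | h0
  · exact .inl (Perm.eq_of_strictMono_comp_succ hmono (by simpa using Fin.strictMono_succ)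
      (by simpa [Fin.lt_one_iff] using h0))
  · exact .inr (Perm.eq_of_strictMono_comp_succ hmono strictMono_swap_zero_one_comp_succ
      (by simpa using h0))

theorem lt_apply_two_of_containsPattern_swap {σ : Perm (Fin 3)}
    (h : ContainsPattern (swap (0 : Fin (m + 2)) 1) σ) : σ 0 < σ 2 ∧ σ 1 < σ 2 := by
  obtain ⟨g, hg, hlt⟩ := h
  have h01 : g 0 < g 1 := hg (by decide)
  have h12 : g 1 < g 2 := hg (by decide)
  have hg2 : 2 ≤ (g 2 : ℕ) := by
    have : (g 0 : ℕ) < g 1 := h01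
    have : (g 1 : ℕ) < g 2 := h12
    omega
  exact ⟨(hlt 0 2).mpr (swap_zero_one_lt_swap_zero_one (h01.trans h12) hg2),
    (hlt 1 2).mpr (swap_zero_one_lt_swap_zero_one h12 hg2)⟩

theorem avoidsAll_swap_zero_one :
    AvoidsAll (swap (0 : Fin (m + 2)) 1) [p132, p231, p312, p321] := by
  intro σ hσ hcont
  have := lt_apply_two_of_containsPattern_swap hcont
  simp only [List.mem_cons, List.not_mem_nil, or_false] at hσ
  rcases hσ with rfl | rfl | rfl | rfl <;> revert this <;> decide

end Swap

end Patterns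

/-- For `n ≥ 2`, the number of parking functions of size `n` whose parking permutation
avoids 132, 231, 312 and 321 equals `(3/2)·n!`. -/
theorem stmt6 (n : ℕ) (hn : 2 ≤ n) :
    2 * pk n [p132, p231, p312, p321] = 3 * n.factorial := by
  obtain ⟨m, rfl⟩ : ∃ m, n = m + 2 := ⟨n - 2, by omega⟩
  have hchar (f : Fin (m + 2) → Fin (m + 2)) :
      (IsParkingFunction f ∧ ∃ ρ, IsParkingPerm f ρ ∧ AvoidsAll ρ [p132, p231, p312, p321]) ↔
        IsParkingPerm f 1 ∨ IsParkingPerm f (swap 0 1) := by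
    constructor
    · rintro ⟨-, ρ, hρ, hav⟩
      rcases eq_one_or_eq_swap_of_avoidsAll hav with rfl | rfl
      exacts [.inl hρ, .inr hρ]
    · rintro (h | h)
      · exact ⟨isParkingFunction_of_isParkingPerm h, 1, h, avoidsAll_one⟩
      · exact ⟨isParkingFunction_of_isParkingPerm h, _, h, avoidsAll_swap_zero_one⟩
  classical
  have hdisj : Disjoint (fun f : Fin (m + 2) → Fin (m + 2) => IsParkingPerm f 1)
      (fun f => IsParkingPerm f (swap 0 1)) := by
    refine disjoint_iff_inf_le.mpr fun f ⟨h1, hswap⟩ => ?_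
    simpa using congrArg (· 0) (h1.unique hswap)
  rw [pk, Nat.card_congr ((Equiv.subtypeEquivRight hchar).trans (subtypeOrEquiv _ _ hdisj)),
    Nat.card_sum]
  have hswap := two_mul_card_isParkingPerm_swap_zero_one (m := m)
  rw [card_isParkingPerm_one] at hswap ⊢
  omega
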